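/- arXiv:2505.08655 — 2 statements merged into one kernel-verified Lean document; each statement's English description precedes it below -/
import Mathlib

section
/- If G is a finite gamegraph and k a nonnegative integer, then nim(G⊓D_{2k}) = nim(G) and nim(G⊓D_{2k+1}) = nim(G⊓D_1). -/
/-- The minimum excludant of a set of naturals. -/
noncomputable def mex (S : Set ℕ) : ℕ := sInf {n : ℕ | n ∉ S}

/-- A gamegraph: positions with an option function whose option relation is
well-founded (all plays are acyclic), together with a starting position. -/
structure GameGraph where
  Pos : Type
  opt : Pos → Set Pos
  wf : WellFounded fun q p => q ∈ opt p
  start : Pos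

/-- The nim-value of a position: the mex of the nim-values of its options;
terminal positions get nim-value `0`. -/
noncomputable def GameGraph.nim (G : GameGraph) : G.Pos → ℕ :=
  G.wf.fix fun p ih => mex {n : ℕ | ∃ q, ∃ h : q ∈ G.opt p, ih q h = n}

/-- The nim-value of a gamegraph is the nim-value of its starting position. -/
noncomputable def GameGraph.nimValue (G : GameGraph) : ℕ := G.nim G.start

/-- The option function of the delayed gamegraph `G ⊓ D_k`: from `(p, r)` one may
either move to `(q, r)` for an option `q` of `p`, or, when `r ≥ 1` and `p` is
nonterminal in `G`, make a delay move to `(p, r - 1)`. -/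
def delayedOpt (G : GameGraph) : G.Pos × ℕ → Set (G.Pos × ℕ) := fun x =>
  {y | (∃ q ∈ G.opt x.1, y = (q, x.2)) ∨
       (1 ≤ x.2 ∧ (G.opt x.1).Nonempty ∧ y = (x.1, x.2 - 1))}

theorem delayedWF (G : GameGraph) : WellFounded fun y x => y ∈ delayedOpt G x := by
  have hsub : Subrelation (fun y x : G.Pos × ℕ => y ∈ delayedOpt G x)
      (Prod.Lex (fun q p => q ∈ G.opt p) (· < ·)) := by
    rintro ⟨p1, r1⟩ ⟨p2, r2⟩ (⟨q, hq, heq⟩ | ⟨hr, -, heq⟩)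
    · cases heq; exact Prod.Lex.left _ _ hq
    · cases heq; exact Prod.Lex.right _ (by omega)
  exact Subrelation.wf hsub (WellFounded.prod_lex G.wf Nat.lt_wfRel.wf)

/-- The delayed gamegraph `G ⊓ D_k`.  Its positions are pairs `(p, r)`; the
starting position is `(G.start, k)` (pairs with second coordinate larger than
`k` are unreachable from it). -/
def GameGraph.delayed (G : GameGraph) (k : ℕ) : GameGraph :=
  ⟨G.Pos × ℕ, delayedOpt G, delayedWF G, (G.start, k)⟩

section Aux

lemma mex_not_mem {S : Set ℕ} (h : S.Finite) : mex S ∉ S := by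
  have hne : {n : ℕ | n ∉ S}.Nonempty := by
    have := h.infinite_compl
    exact this.nonempty
  exact Nat.sInf_mem hne

lemma mem_of_lt_mex {S : Set ℕ} {n : ℕ} (h : n < mex S) : n ∈ S := by
  by_contra hn
  exact absurd (Nat.sInf_le (show n ∈ {m : ℕ | m ∉ S} from hn)) (not_le.2 h)

lemma mex_eq_of {S : Set ℕ} {a : ℕ} (h1 : a ∉ S) (h2 : ∀ n < a, n ∈ S) : mex S = a := by
  refine le_antisymm (Nat.sInf_le h1) (le_csInf ⟨a, h1⟩ fun n hn => ?_)
  exact not_lt.1 fun hlt => hn (h2 n hlt)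

lemma mex_empty : mex (∅ : Set ℕ) = 0 :=
  mex_eq_of (by simp) (by simp)

lemma GameGraph.nim_def (G : GameGraph) (p : G.Pos) :
    G.nim p = mex {n : ℕ | ∃ q, ∃ _ : q ∈ G.opt p, G.nim q = n} := by
  conv_lhs => rw [GameGraph.nim, WellFounded.fix_eq]
  rfl

lemma GameGraph.nim_eq_image (G : GameGraph) (p : G.Pos) :
    G.nim p = mex (G.nim '' G.opt p) := by
  rw [G.nim_def p]
  congr 1
  ext n
  simp [Set.mem_image]

/-- The nim function of any delayed game (independent of the start counter). -/
noncomputable def Nd (G : GameGraph) : G.Pos × ℕ → ℕ := (G.delayed 0).nim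

/-- Nim values of options at delay level `r`. -/
def Sd (G : GameGraph) (p : G.Pos) (r : ℕ) : Set ℕ := (fun q => Nd G (q, r)) '' G.opt p

lemma Sd_finite (G : GameGraph) [Finite G.Pos] (p : G.Pos) (r : ℕ) : (Sd G p r).Finite :=
  (Set.toFinite _).image _

lemma delayed_nim (G : GameGraph) (k : ℕ) : (G.delayed k).nim = Nd G := rfl

lemma Nd_term (G : GameGraph) {p : G.Pos} (h : G.opt p = ∅) (r : ℕ) : Nd G (p, r) = 0 := by
  have hopt : delayedOpt G (p, r) = ∅ := by
    ext y
    simp [delayedOpt, h]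
  rw [Nd]; refine (GameGraph.nim_eq_image (G.delayed 0) (p, r)).trans ?_
  show mex (Nd G '' delayedOpt G (p, r)) = 0
  rw [hopt, Set.image_empty, mex_empty]

lemma Nd_zero (G : GameGraph) (p : G.Pos) : Nd G (p, 0) = mex (Sd G p 0) := by
  have hopt : delayedOpt G (p, 0) = (fun q => (q, 0)) '' G.opt p := by
    ext y
    simp [delayedOpt, Set.mem_image, eq_comm]
  rw [Nd]; refine (GameGraph.nim_eq_image (G.delayed 0) (p, 0)).trans ?_
  show mex (Nd G '' delayedOpt G (p, 0)) = _
  rw [hopt, Set.image_image]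
  rfl

lemma Nd_succ (G : GameGraph) {p : G.Pos} (h : (G.opt p).Nonempty) (r : ℕ) :
    Nd G (p, r + 1) = mex (Sd G p (r + 1) ∪ {Nd G (p, r)}) := by
  have hp' := h
  have hopt : delayedOpt G (p, r + 1) = (fun q => (q, r + 1)) '' G.opt p ∪ {(p, r)} := by
    ext y
    simp only [delayedOpt, Set.mem_setOf_eq, Set.mem_union, Set.mem_image,
      Set.mem_singleton_iff, h, true_and]
    constructor
    · rintro (⟨q, hq, rfl⟩ | ⟨-, h2⟩)
      · exact Or.inl ⟨q, hq, rfl⟩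
      · exact Or.inr (by simpa using h2)
    · rintro (⟨q, hq, rfl⟩ | rfl)
      · exact Or.inl ⟨q, hq, rfl⟩
      · exact Or.inr ⟨by omega, rfl⟩
  rw [Nd]; refine (GameGraph.nim_eq_image (G.delayed 0) (p, r + 1)).trans ?_
  show mex (Nd G '' delayedOpt G (p, r + 1)) = _
  rw [hopt, Set.image_union, Set.image_image, Set.image_singleton]
  rfl

lemma Nd_period (G : GameGraph) [Finite G.Pos] :
    ∀ p : G.Pos, ∀ r : ℕ, Nd G (p, r + 2) = Nd G (p, r) := fun p =>
  G.wf.induction (C := fun p => ∀ r : ℕ, Nd G (p, r + 2) = Nd G (p, r)) p fun p ih => by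
    show ∀ r : ℕ, Nd G (p, r + 2) = Nd G (p, r)
    rcases Set.eq_empty_or_nonempty (G.opt p) with hp | hp
    · intro r; rw [Nd_term G hp, Nd_term G hp]
    · have hS : ∀ r, Sd G p (r + 2) = Sd G p r := fun r =>
        Set.image_congr fun q hq => ih q hq r
      have base : Nd G (p, 2) = Nd G (p, 0) := by
        rw [show (2:ℕ) = 1 + 1 from rfl, Nd_succ G hp, hS 0]
        apply mex_eq_of
        · rintro (hmem | hmem)
          · rw [Nd_zero] at hmem
            exact mex_not_mem (Sd_finite G p 0) hmem
          · have h1 : Nd G (p, 1) ∉ Sd G p 1 ∪ {Nd G (p, 0)} := by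
              rw [show (1:ℕ) = 0 + 1 from rfl, Nd_succ G hp]
              exact mex_not_mem ((Sd_finite G p 1).union (Set.finite_singleton _))
            apply h1
            right
            simpa using hmem.symm
        · intro n hn
          left
          rw [Nd_zero] at hn
          exact mem_of_lt_mex hn
      intro r
      induction r with
      | zero => exact base
      | succ r ihr =>
        rw [show r + 1 + 2 = (r + 2) + 1 by omega, Nd_succ G hp,
          show r + 2 + 1 = (r + 1) + 2 by omega, hS (r + 1), ihr, ← Nd_succ G hp]

lemma Nd_zero_eq_nim (G : GameGraph) : ∀ p : G.Pos, Nd G (p, 0) = G.nim p := fun p =>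
  G.wf.induction (C := fun p => Nd G (p, 0) = G.nim p) p fun p ih => by
    show Nd G (p, 0) = G.nim p
    rw [Nd_zero, GameGraph.nim_eq_image]
    congr 1
    exact Set.image_congr fun q hq => ih q hq

lemma Nd_even (G : GameGraph) [Finite G.Pos] (p : G.Pos) (k : ℕ) :
    Nd G (p, 2 * k) = Nd G (p, 0) := by
  induction k with
  | zero => rfl
  | succ k ihk =>
    rw [show 2 * (k + 1) = 2 * k + 2 by omega, Nd_period G p, ihk]

lemma Nd_odd (G : GameGraph) [Finite G.Pos] (p : G.Pos) (k : ℕ) :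
    Nd G (p, 2 * k + 1) = Nd G (p, 1) := by
  induction k with
  | zero => rfl
  | succ k ihk =>
    rw [show 2 * (k + 1) + 1 = (2 * k + 1) + 2 by omega, Nd_period G p, ihk]

end Aux

/-- For a finite gamegraph `G`, `nim (G ⊓ D_{2k}) = nim G` and
`nim (G ⊓ D_{2k+1}) = nim (G ⊓ D_1)`. -/
theorem delayed_nimValue (G : GameGraph) [Finite G.Pos] (k : ℕ) :
    (G.delayed (2 * k)).nimValue = G.nimValue ∧
    (G.delayed (2 * k + 1)).nimValue = (G.delayed 1).nimValue := by
  constructor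
  · show Nd G (G.start, 2 * k) = G.nim G.start
    rw [Nd_even, Nd_zero_eq_nim]
  · show Nd G (G.start, 2 * k + 1) = Nd G (G.start, 1)
    rw [Nd_odd]
end

section
/- Let 2 ≤ m ≤ n with 3 ≤ n. The map α, sending each position of TER(P_m□P_n) to the 3×3 matrix counting unselected vertices in the nine regions of the grid, is an option preserving map from the gamegraph of TER(P_m□P_n) onto the gamegraph of the matrix game TER(M), where M = [[1, n−2, 1], [m−2, (m−2)(n−2), m−2], [1, n−2, 1]] is the image of the starting position. -/
/-- 3×3 matrices of nonnegative integers. -/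
abbrev Mat3 := Fin 3 → Fin 3 → ℕ

/-- All four edge sums (top row, bottom row, left column, right column) are positive. -/
def edgeOK (M : Mat3) : Prop :=
  0 < M 0 0 + M 0 1 + M 0 2 ∧ 0 < M 2 0 + M 2 1 + M 2 2 ∧
  0 < M 0 0 + M 1 0 + M 2 0 ∧ 0 < M 0 2 + M 1 2 + M 2 2

/-- Decrease entry `(i, j)` by one. -/
def decEntry (M : Mat3) (i j : Fin 3) : Mat3 :=
  fun a b => if a = i ∧ b = j then M a b - 1 else M a b

/-- Matrices obtained from `M` by decreasing one positive entry by `1`. -/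
def matMoves (M : Mat3) : Set Mat3 :=
  {N | ∃ i j, 0 < M i j ∧ N = decEntry M i j}

/-- Options in the avoidance matrix game `DNT(M)`: decrease a positive entry by one
so that all four edge sums remain positive. -/
def DNTmatOpt (M : Mat3) : Set Mat3 := {N | N ∈ matMoves M ∧ edgeOK N}

/-- Options in the achievement matrix game `TER(M)`: a matrix with a zero edge sum is
terminal; otherwise any positive entry may be decreased by one. -/
def TERmatOpt (M : Mat3) : Set Mat3 := {N | edgeOK M ∧ N ∈ matMoves M}

def mtot (M : Mat3) : ℕ := ∑ p : Fin 3 × Fin 3, M p.1 p.2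

theorem mtot_lt {M N : Mat3} (h : N ∈ matMoves M) : mtot N < mtot M := by
  obtain ⟨i, j, hpos, rfl⟩ := h
  unfold mtot
  apply Finset.sum_lt_sum
  · intro p _
    simp only [decEntry]
    split <;> omega
  · refine ⟨(i, j), Finset.mem_univ _, ?_⟩
    have hlt : M i j - 1 < M i j := by omega
    simpa [decEntry] using hlt

theorem matWF {opt : Mat3 → Set Mat3} (h : ∀ M N, N ∈ opt M → N ∈ matMoves M) :
    WellFounded fun N M => N ∈ opt M :=
  Subrelation.wf (fun {N M} hNM => mtot_lt (h M N hNM)) (InvImage.wf mtot Nat.lt_wfRel.wf)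

/-- The gamegraph of the matrix game `DNT(M)` with starting position `M`. -/
def DNTmat (M : Mat3) : GameGraph :=
  ⟨Mat3, DNTmatOpt, matWF (fun _ _ h => h.1), M⟩

/-- The gamegraph of the matrix game `TER(M)` with starting position `M`. -/
def TERmat (M : Mat3) : GameGraph :=
  ⟨Mat3, TERmatOpt, matWF (fun _ _ h => h.2), M⟩

/-- The nim-value of the matrix game `DNT(M)`. -/
noncomputable def nimDNTmat (M : Mat3) : ℕ := (DNTmat M).nimValue

/-- The nim-value of the matrix game `TER(M)`. -/
noncomputable def nimTERmat (M : Mat3) : ℕ := (TERmat M).nimValue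

/-- A vertex set `K` is geodetically convex if it contains every vertex on a
geodesic (shortest path) between two of its vertices; in a connected graph,
`w` lies on a geodesic from `u` to `v` iff `dist u w + dist w v = dist u v`. -/
def geoConvex {V : Type} (G : SimpleGraph V) (K : Set V) : Prop :=
  ∀ u ∈ K, ∀ v ∈ K, ∀ w, G.dist u w + G.dist w v = G.dist u v → w ∈ K

/-- The geodetic convex hull: the intersection of all convex sets containing `S`. -/
def geoHull {V : Type} (G : SimpleGraph V) (S : Set V) : Set V :=
  ⋂₀ {K | geoConvex G K ∧ S ⊆ K}

section Games
variable {V : Type} [Fintype V] [DecidableEq V]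

/-- Options in the avoidance game `DNT(Γ)`: select an unselected vertex so that the
convex hull of the remaining unselected vertices is still the whole vertex set. -/
def DNTgraphOpt (G : SimpleGraph V) (P : Finset V) : Set (Finset V) :=
  {Q | ∃ v, v ∉ P ∧ Q = insert v P ∧
    geoHull G ((↑(insert v P) : Set V)ᶜ) = Set.univ}

/-- Options in the achievement game `TER(Γ)`: a position whose unselected vertices
have convex hull smaller than the whole vertex set is terminal; otherwise any
unselected vertex may be selected. -/
def TERgraphOpt (G : SimpleGraph V) (P : Finset V) : Set (Finset V) :=
  {Q | geoHull G ((↑P : Set V)ᶜ) = Set.univ ∧ ∃ v, v ∉ P ∧ Q = insert v P}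

theorem graphWF {opt : Finset V → Set (Finset V)}
    (h : ∀ P Q, Q ∈ opt P → ∃ v, v ∉ P ∧ Q = insert v P) :
    WellFounded fun Q P => Q ∈ opt P := by
  have hsub : Subrelation (fun Q P : Finset V => Q ∈ opt P)
      (InvImage (· < ·) (fun P : Finset V => Fintype.card V - P.card)) := by
    intro Q P hQP
    obtain ⟨v, hv, rfl⟩ := h P Q hQP
    have h1 : (insert v P).card = P.card + 1 := Finset.card_insert_of_notMem hv
    have h2 : (insert v P).card ≤ Fintype.card V := Finset.card_le_univ _
    show Fintype.card V - (insert v P).card < Fintype.card V - P.card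
    omega
  exact Subrelation.wf hsub (InvImage.wf _ Nat.lt_wfRel.wf)

/-- The gamegraph of the avoidance game `DNT(Γ)`; positions are the sets of jointly
selected vertices and the starting position is `∅`. -/
def DNTgame (G : SimpleGraph V) : GameGraph :=
  ⟨Finset V, DNTgraphOpt G,
    graphWF (by rintro P Q ⟨v, hv, rfl, -⟩; exact ⟨v, hv, rfl⟩), ∅⟩

/-- The gamegraph of the achievement game `TER(Γ)`; positions are the sets of jointly
selected vertices and the starting position is `∅`. -/
def TERgame (G : SimpleGraph V) : GameGraph :=
  ⟨Finset V, TERgraphOpt G,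
    graphWF (by rintro P Q ⟨-, v, hv, rfl⟩; exact ⟨v, hv, rfl⟩), ∅⟩

end Games

/-- The grid graph `P_m □ P_n`, the box product of two path graphs. -/
def gridGraph (m n : ℕ) : SimpleGraph (Fin m × Fin n) :=
  (SimpleGraph.pathGraph m).boxProd (SimpleGraph.pathGraph n)

/-- Region index of a coordinate in a path on `m` vertices: `0` for the first
vertex, `2` for the last vertex, `1` for interior vertices. -/
def regIdx (m : ℕ) (i : Fin m) : Fin 3 :=
  if i.val = 0 then 0 else if i.val = m - 1 then 2 else 1

/-- The map `α` sending a position `P` (the set of selected vertices) of a game on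
the grid `P_m □ P_n` to the 3×3 matrix counting the unselected vertices in the
nine regions of the grid (four corners, four sides without corners, interior). -/
def alphaMap (m n : ℕ) (P : Finset (Fin m × Fin n)) : Mat3 := fun a b =>
  (Finset.univ.filter
    (fun v : Fin m × Fin n => v ∉ P ∧ regIdx m v.1 = a ∧ regIdx n v.2 = b)).card

/-- A map between gamegraphs is option preserving if `Opt_H (β p) = β '' (Opt_G p)`
for every position `p`. -/
def OptionPreserving (G H : GameGraph) (β : G.Pos → H.Pos) : Prop :=
  ∀ p : G.Pos, H.opt (β p) = β '' G.opt p


set_option maxHeartbeats 1000000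
set_option linter.unnecessarySeqFocus false
set_option linter.unreachableTactic false
set_option linter.unusedTactic false

def gdist {m n : ℕ} (u v : Fin m × Fin n) : ℕ :=
  ((u.1.val - v.1.val) + (v.1.val - u.1.val)) + ((u.2.val - v.2.val) + (v.2.val - u.2.val))

lemma grid_adj {m n : ℕ} {u v : Fin m × Fin n} : (gridGraph m n).Adj u v ↔
    ((u.1.val + 1 = v.1.val ∨ v.1.val + 1 = u.1.val) ∧ u.2 = v.2) ∨
    (u.1 = v.1 ∧ (u.2.val + 1 = v.2.val ∨ v.2.val + 1 = u.2.val)) := by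
  simp [gridGraph, SimpleGraph.boxProd_adj, SimpleGraph.pathGraph_adj]; tauto

lemma exists_walk_gdist {m n : ℕ} : ∀ (k : ℕ) (u v : Fin m × Fin n), gdist u v = k →
    ∃ w : (gridGraph m n).Walk u v, w.length = k := by
  intro k
  induction k with
  | zero =>
    intro u v h
    have : u = v := by
      have h1 := u.1.isLt; have h2 := v.1.isLt
      ext
      · simp only [gdist] at h; omega
      · simp only [gdist] at h; omega
    subst this
    exact ⟨SimpleGraph.Walk.nil, rfl⟩
  | succ k ih =>
    intro u v h
    simp only [gdist] at h
    by_cases h1 : u.1.val < v.1.val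
    · set u' : Fin m × Fin n := (⟨u.1.val + 1, by omega⟩, u.2) with hu'
      have hadj : (gridGraph m n).Adj u u' := grid_adj.mpr (Or.inl ⟨Or.inl rfl, rfl⟩)
      obtain ⟨w, hw⟩ := ih u' v (by simp only [gdist, hu']; omega)
      exact ⟨SimpleGraph.Walk.cons hadj w, by simp [hw]⟩
    · by_cases h2 : v.1.val < u.1.val
      · set u' : Fin m × Fin n := (⟨u.1.val - 1, by omega⟩, u.2) with hu'
        have hadj : (gridGraph m n).Adj u u' := grid_adj.mpr (Or.inl ⟨Or.inr (by simp only [hu']; omega), rfl⟩)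
        obtain ⟨w, hw⟩ := ih u' v (by simp only [gdist, hu']; omega)
        exact ⟨SimpleGraph.Walk.cons hadj w, by simp [hw]⟩
      · have hfst : u.1 = v.1 := by ext; omega
        by_cases h3 : u.2.val < v.2.val
        · set u' : Fin m × Fin n := (u.1, ⟨u.2.val + 1, by omega⟩) with hu'
          have hadj : (gridGraph m n).Adj u u' := grid_adj.mpr (Or.inr ⟨rfl, Or.inl rfl⟩)
          obtain ⟨w, hw⟩ := ih u' v (by simp only [gdist, hu']; omega)
          exact ⟨SimpleGraph.Walk.cons hadj w, by simp [hw]⟩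
        · set u' : Fin m × Fin n := (u.1, ⟨u.2.val - 1, by omega⟩) with hu'
          have hadj : (gridGraph m n).Adj u u' := grid_adj.mpr (Or.inr ⟨rfl, Or.inr (by simp only [hu']; omega)⟩)
          obtain ⟨w, hw⟩ := ih u' v (by simp only [gdist, hu']; omega)
          exact ⟨SimpleGraph.Walk.cons hadj w, by simp [hw]⟩

lemma gdist_le_walk {m n : ℕ} {u v : Fin m × Fin n} (w : (gridGraph m n).Walk u v) :
    gdist u v ≤ w.length := by
  induction w with
  | nil => simp [gdist]
  | cons h p ih =>
    rename_i a b c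
    have := grid_adj.mp h
    simp only [SimpleGraph.Walk.length_cons]
    have hab : gdist a b = 1 := by
      rcases this with ⟨h1, h2⟩ | ⟨h1, h2⟩
      · have : a.2.val = b.2.val := by rw [h2]
        simp only [gdist]; omega
      · have : a.1.val = b.1.val := by rw [h1]
        simp only [gdist]; omega
    have tri : gdist a c ≤ gdist a b + gdist b c := by simp only [gdist]; omega
    omega

lemma grid_dist {m n : ℕ} (u v : Fin m × Fin n) : (gridGraph m n).dist u v = gdist u v := by
  obtain ⟨w, hw⟩ := exists_walk_gdist (gdist u v) u v rfl
  have h1 : (gridGraph m n).dist u v ≤ gdist u v := hw ▸ SimpleGraph.dist_le w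
  obtain ⟨p, hp⟩ := (SimpleGraph.Walk.reachable w).exists_walk_length_eq_dist
  have h2 := gdist_le_walk p
  omega

lemma hull_univ_iff {m n : ℕ} (hm : 2 ≤ m) (hn : 2 ≤ n) (S : Set (Fin m × Fin n)) :
    geoHull (gridGraph m n) S = Set.univ ↔
      (∃ v ∈ S, v.1.val = 0) ∧ (∃ v ∈ S, v.1.val = m - 1) ∧
      (∃ v ∈ S, v.2.val = 0) ∧ (∃ v ∈ S, v.2.val = n - 1) := by
  have hz : ∀ h : geoHull (gridGraph m n) S = Set.univ, ∀ K, geoConvex (gridGraph m n) K →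
      S ⊆ K → ∀ z : Fin m × Fin n, z ∈ K := by
    intro h K hK hS z
    have : z ∈ geoHull (gridGraph m n) S := h ▸ Set.mem_univ z
    exact Set.mem_sInter.mp this K ⟨hK, hS⟩
  constructor
  · intro h
    refine ⟨?_, ?_, ?_, ?_⟩
    · by_contra hc; push_neg at hc
      have := hz h {v | v.1.val ≠ 0} ?conv (fun v hv => hc v hv) (⟨0, by omega⟩, ⟨0, by omega⟩)
      · exact this rfl
      case conv =>
        intro u hu v hv w hw
        rw [grid_dist, grid_dist, grid_dist] at hw
        simp only [gdist] at hw
        simp only [Set.mem_setOf_eq] at hu hv ⊢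
        omega
    · by_contra hc; push_neg at hc
      have h1 : ∀ i : Fin m, i.val < m := fun i => i.isLt
      have := hz h {v | v.1.val ≠ m - 1} ?conv (fun v hv => hc v hv) (⟨m - 1, by omega⟩, ⟨0, by omega⟩)
      · exact this rfl
      case conv =>
        intro u hu v hv w hw
        rw [grid_dist, grid_dist, grid_dist] at hw
        simp only [gdist] at hw
        simp only [Set.mem_setOf_eq] at hu hv ⊢
        have := u.1.isLt; have := v.1.isLt; have := w.1.isLt
        omega
    · by_contra hc; push_neg at hc
      have := hz h {v | v.2.val ≠ 0} ?conv (fun v hv => hc v hv) (⟨0, by omega⟩, ⟨0, by omega⟩)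
      · exact this rfl
      case conv =>
        intro u hu v hv w hw
        rw [grid_dist, grid_dist, grid_dist] at hw
        simp only [gdist] at hw
        simp only [Set.mem_setOf_eq] at hu hv ⊢
        omega
    · by_contra hc; push_neg at hc
      have := hz h {v | v.2.val ≠ n - 1} ?conv (fun v hv => hc v hv) (⟨0, by omega⟩, ⟨n - 1, by omega⟩)
      · exact this rfl
      case conv =>
        intro u hu v hv w hw
        rw [grid_dist, grid_dist, grid_dist] at hw
        simp only [gdist] at hw
        simp only [Set.mem_setOf_eq] at hu hv ⊢
        have := u.2.isLt; have := v.2.isLt; have := w.2.isLt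
        omega
  · rintro ⟨⟨p0, hp0S, hp0⟩, ⟨p1, hp1S, hp1⟩, ⟨q0, hq0S, hq0⟩, ⟨q1, hq1S, hq1⟩⟩
    ext t
    simp only [Set.mem_univ, iff_true]
    rw [geoHull, Set.mem_sInter]
    rintro K ⟨hK, hS⟩
    have step : ∀ u ∈ K, ∀ v ∈ K, ∀ w : Fin m × Fin n,
        (u.1.val ≤ w.1.val ∧ w.1.val ≤ v.1.val ∨ v.1.val ≤ w.1.val ∧ w.1.val ≤ u.1.val) →
        (u.2.val ≤ w.2.val ∧ w.2.val ≤ v.2.val ∨ v.2.val ≤ w.2.val ∧ w.2.val ≤ u.2.val) →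
        w ∈ K := by
      intro u hu v hv w h1 h2
      refine hK u hu v hv w ?_
      rw [grid_dist, grid_dist, grid_dist]
      simp only [gdist]
      omega
    have hp0K := hS hp0S; have hp1K := hS hp1S
    have hq0K := hS hq0S; have hq1K := hS hq1S
    have ht1 := t.1.isLt; have ht2 := t.2.isLt
    have hq02 := q0.1.isLt
    -- the vertical segment through column q0.1 is in K (all y)
    have hcol : ∀ y : Fin n, (q0.1, y) ∈ K := by
      intro y
      exact step q0 hq0K q1 hq1K (q0.1, y) (by dsimp only; omega) (by simp; have := y.isLt; omega)
    rcases le_or_gt (min p0.2.val p1.2.val) t.2.val with hmin | hmin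
    · rcases le_or_gt t.2.val (max p0.2.val p1.2.val) with hmax | hmax
      · -- t between rows a and b
        exact step p0 hp0K p1 hp1K t (by omega) (by omega)
      · -- t above max
        obtain ⟨e, he⟩ : ∃ e : Fin n, e.val = max p0.2.val p1.2.val := by
          rcases le_total p0.2.val p1.2.val with h | h
          exacts [⟨p1.2, (max_eq_right h).symm⟩, ⟨p0.2, (max_eq_left h).symm⟩]
        have hw0 : (p0.1, e) ∈ K := step p0 hp0K p1 hp1K _ (by dsimp only; omega) (by dsimp only; omega)
        have hw1 : (p1.1, e) ∈ K := step p0 hp0K p1 hp1K _ (by dsimp only; omega) (by dsimp only; omega)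
        have hwq : (q0.1, t.2) ∈ K := hcol t.2
        rcases le_or_gt t.1.val q0.1.val with hx | hx
        · exact step (p0.1, e) hw0 (q0.1, t.2) hwq t (by dsimp only; omega) (by dsimp only; omega)
        · exact step (p1.1, e) hw1 (q0.1, t.2) hwq t (by dsimp only; omega) (by dsimp only; omega)
    · -- t below min
      obtain ⟨e, he⟩ : ∃ e : Fin n, e.val = min p0.2.val p1.2.val := by
        rcases le_total p0.2.val p1.2.val with h | h
        exacts [⟨p0.2, (min_eq_left h).symm⟩, ⟨p1.2, (min_eq_right h).symm⟩]
      have hw0 : (p0.1, e) ∈ K := step p0 hp0K p1 hp1K _ (by dsimp only; omega) (by dsimp only; omega)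
      have hw1 : (p1.1, e) ∈ K := step p0 hp0K p1 hp1K _ (by dsimp only; omega) (by dsimp only; omega)
      have hwq : (q0.1, t.2) ∈ K := hcol t.2
      rcases le_or_gt t.1.val q0.1.val with hx | hx
      · exact step (p0.1, e) hw0 (q0.1, t.2) hwq t (by dsimp only; omega) (by dsimp only; omega)
      · exact step (p1.1, e) hw1 (q0.1, t.2) hwq t (by dsimp only; omega) (by dsimp only; omega)


lemma fin3_cases (j : Fin 3) : j = 0 ∨ j = 1 ∨ j = 2 := by revert j; decide

lemma regIdx_eq_zero {m : ℕ} (i : Fin m) : regIdx m i = 0 ↔ i.val = 0 := by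
  unfold regIdx
  split_ifs with h1 h2 <;> simp_all

lemma regIdx_eq_two {m : ℕ} (hm : 2 ≤ m) (i : Fin m) : regIdx m i = 2 ↔ i.val = m - 1 := by
  unfold regIdx
  split_ifs with h1 h2 <;> simp_all <;> omega

lemma regIdx_eq_one {m : ℕ} (i : Fin m) : regIdx m i = 1 ↔ (i.val ≠ 0 ∧ i.val ≠ m - 1) := by
  unfold regIdx
  split_ifs with h1 h2 <;> simp_all

lemma regcount_zero {m : ℕ} (hm : 2 ≤ m) :
    (Finset.univ.filter fun i : Fin m => regIdx m i = 0).card = 1 := by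
  have : (Finset.univ.filter fun i : Fin m => regIdx m i = 0) = {⟨0, by omega⟩} := by
    ext i
    simp only [Finset.mem_filter, Finset.mem_univ, true_and, Finset.mem_singleton,
      regIdx_eq_zero]
    exact ⟨fun h => Fin.ext h, fun h => by rw [h]⟩
  rw [this, Finset.card_singleton]

lemma regcount_two {m : ℕ} (hm : 2 ≤ m) :
    (Finset.univ.filter fun i : Fin m => regIdx m i = 2).card = 1 := by
  have : (Finset.univ.filter fun i : Fin m => regIdx m i = 2) = {⟨m - 1, by omega⟩} := by
    ext i
    simp only [Finset.mem_filter, Finset.mem_univ, true_and, Finset.mem_singleton,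
      regIdx_eq_two hm]
    exact ⟨fun h => Fin.ext h, fun h => by rw [h]⟩
  rw [this, Finset.card_singleton]

lemma regcount_one {m : ℕ} (hm : 2 ≤ m) :
    (Finset.univ.filter fun i : Fin m => regIdx m i = 1).card = m - 2 := by
  have hneg : (Finset.univ.filter fun i : Fin m => ¬ regIdx m i = 1) =
      {(⟨0, by omega⟩ : Fin m), ⟨m - 1, by omega⟩} := by
    ext i
    simp only [Finset.mem_filter, Finset.mem_univ, true_and, regIdx_eq_one,
      Finset.mem_insert, Finset.mem_singleton]
    constructor
    · intro h
      rcases (show i.val = 0 ∨ i.val = m - 1 by omega) with h' | h'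
      · exact Or.inl (Fin.ext h')
      · exact Or.inr (Fin.ext h')
    · rintro (rfl | rfl) <;> simp <;> omega
  have hcard := Finset.card_filter_add_card_filter_not
    (s := (Finset.univ : Finset (Fin m))) (p := fun i : Fin m => regIdx m i = 1)
  rw [hneg] at hcard
  rw [Finset.card_pair (by simp only [ne_eq, Fin.ext_iff]; omega)] at hcard
  simp only [Finset.card_univ, Fintype.card_fin] at hcard
  omega


lemma alpha_pos_iff {m n : ℕ} (P : Finset (Fin m × Fin n)) (i j : Fin 3) :
    0 < alphaMap m n P i j ↔ ∃ v, v ∉ P ∧ regIdx m v.1 = i ∧ regIdx n v.2 = j := by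
  rw [alphaMap, Finset.card_pos, Finset.filter_nonempty_iff]
  simp

lemma rowsum_pos_iff {m n : ℕ} (P : Finset (Fin m × Fin n)) (i0 : Fin 3) :
    0 < alphaMap m n P i0 0 + alphaMap m n P i0 1 + alphaMap m n P i0 2 ↔
      ∃ v, v ∉ P ∧ regIdx m v.1 = i0 := by
  constructor
  · intro h
    rcases (show 0 < alphaMap m n P i0 0 ∨ 0 < alphaMap m n P i0 1 ∨ 0 < alphaMap m n P i0 2
      from by omega) with h | h | h <;>
      · obtain ⟨v, hv1, hv2, -⟩ := (alpha_pos_iff P i0 _).mp h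
        exact ⟨v, hv1, hv2⟩
  · rintro ⟨v, hv, hr⟩
    have := (alpha_pos_iff P i0 (regIdx n v.2)).mpr ⟨v, hv, hr, rfl⟩
    rcases fin3_cases (regIdx n v.2) with h | h | h <;> rw [h] at this <;> omega

lemma colsum_pos_iff {m n : ℕ} (P : Finset (Fin m × Fin n)) (j0 : Fin 3) :
    0 < alphaMap m n P 0 j0 + alphaMap m n P 1 j0 + alphaMap m n P 2 j0 ↔
      ∃ v, v ∉ P ∧ regIdx n v.2 = j0 := by
  constructor
  · intro h
    rcases (show 0 < alphaMap m n P 0 j0 ∨ 0 < alphaMap m n P 1 j0 ∨ 0 < alphaMap m n P 2 j0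
      from by omega) with h | h | h <;>
      · obtain ⟨v, hv1, -, hv2⟩ := (alpha_pos_iff P _ j0).mp h
        exact ⟨v, hv1, hv2⟩
  · rintro ⟨v, hv, hr⟩
    have := (alpha_pos_iff P (regIdx m v.1) j0).mpr ⟨v, hv, rfl, hr⟩
    rcases fin3_cases (regIdx m v.1) with h | h | h <;> rw [h] at this <;> omega

lemma edgeOK_iff {m n : ℕ} (hm : 2 ≤ m) (hn : 2 ≤ n) (P : Finset (Fin m × Fin n)) :
    edgeOK (alphaMap m n P) ↔ geoHull (gridGraph m n) ((↑P : Set (Fin m × Fin n))ᶜ) = Set.univ := by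
  rw [hull_univ_iff hm hn]
  unfold edgeOK
  rw [rowsum_pos_iff, rowsum_pos_iff, colsum_pos_iff, colsum_pos_iff]
  simp only [Set.mem_compl_iff, Finset.mem_coe, regIdx_eq_zero, regIdx_eq_two hm,
    regIdx_eq_two hn]

lemma alpha_insert {m n : ℕ} (P : Finset (Fin m × Fin n)) (v : Fin m × Fin n) (hv : v ∉ P) :
    alphaMap m n (insert v P) = decEntry (alphaMap m n P) (regIdx m v.1) (regIdx n v.2) := by
  funext a b
  simp only [decEntry]
  split_ifs with h
  · obtain ⟨ha, hb⟩ := h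
    rw [alphaMap, alphaMap]
    have hfil : (Finset.univ.filter
        (fun w : Fin m × Fin n => w ∉ insert v P ∧ regIdx m w.1 = a ∧ regIdx n w.2 = b)) =
        (Finset.univ.filter
        (fun w : Fin m × Fin n => w ∉ P ∧ regIdx m w.1 = a ∧ regIdx n w.2 = b)).erase v := by
      ext w
      simp only [Finset.mem_erase, Finset.mem_filter, Finset.mem_insert, Finset.mem_univ,
        true_and, not_or]
      tauto
    rw [hfil, Finset.card_erase_of_mem]
    simp only [Finset.mem_filter, Finset.mem_univ, true_and]
    exact ⟨hv, ha.symm, hb.symm⟩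
  · rw [alphaMap, alphaMap]
    congr 1
    ext w
    simp only [Finset.mem_filter, Finset.mem_univ, true_and, Finset.mem_insert, not_or]
    constructor
    · rintro ⟨⟨-, hw⟩, h1, h2⟩; exact ⟨hw, h1, h2⟩
    · rintro ⟨hw, h1, h2⟩
      refine ⟨⟨?_, hw⟩, h1, h2⟩
      rintro rfl
      exact h ⟨h1.symm, h2.symm⟩

lemma alpha_empty {m n : ℕ} (hm : 2 ≤ m) (hn : 2 ≤ n) :
    alphaMap m n (∅ : Finset (Fin m × Fin n)) =
      ![![1, n - 2, 1], ![m - 2, (m - 2) * (n - 2), m - 2], ![1, n - 2, 1]] := by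
  funext a b
  have h1 : alphaMap m n (∅ : Finset (Fin m × Fin n)) a b =
      (Finset.univ.filter fun i : Fin m => regIdx m i = a).card *
      (Finset.univ.filter fun j : Fin n => regIdx n j = b).card := by
    rw [alphaMap]
    rw [← Finset.card_product]
    congr 1
    rw [← Finset.filter_product (fun i : Fin m => regIdx m i = a)
      (fun j : Fin n => regIdx n j = b), Finset.univ_product_univ]
    congr 1
    funext w
    simp
  rw [h1]
  fin_cases a <;> fin_cases b <;>
    simp [regcount_zero hm, regcount_zero hn, regcount_one hm, regcount_one hn,
      regcount_two hm, regcount_two hn]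

/-- The map `α` is an option preserving map from the gamegraph of
`TER(P_m □ P_n)` onto the gamegraph of the matrix game `TER(M)`, where `M`,
the image of the starting position, is the matrix
`[[1, n-2, 1], [m-2, (m-2)(n-2), m-2], [1, n-2, 1]]`; ontoness is expressed by
saying that every subposition of `M` in `TER(M)` lies in the image of `α`. -/
theorem alpha_optionPreserving_TER (m n : ℕ) (hm : 2 ≤ m) (hmn : m ≤ n) (hn : 3 ≤ n) :
    OptionPreserving (TERgame (gridGraph m n)) (TERmat ![![1, n - 2, 1], ![m - 2, (m - 2) * (n - 2), m - 2], ![1, n - 2, 1]])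
      (alphaMap m n) ∧
    alphaMap m n (∅ : Finset (Fin m × Fin n)) = ![![1, n - 2, 1], ![m - 2, (m - 2) * (n - 2), m - 2], ![1, n - 2, 1]] ∧
    (∀ N : Mat3,
      Relation.ReflTransGen (fun X Y => Y ∈ TERmatOpt X) ![![1, n - 2, 1], ![m - 2, (m - 2) * (n - 2), m - 2], ![1, n - 2, 1]] N →
      ∃ P : Finset (Fin m × Fin n), alphaMap m n P = N) := by
  have hn2 : 2 ≤ n := by omega
  refine ⟨?_, alpha_empty hm hn2, ?_⟩
  · intro P
    show TERmatOpt (alphaMap m n P) = alphaMap m n '' TERgraphOpt (gridGraph m n) P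
    ext N
    simp only [TERmatOpt, matMoves, TERgraphOpt, Set.mem_setOf_eq, Set.mem_image]
    constructor
    · rintro ⟨hok, i, j, hpos, rfl⟩
      obtain ⟨v, hvP, hvi, hvj⟩ := (alpha_pos_iff P i j).mp hpos
      refine ⟨insert v P, ⟨(edgeOK_iff hm hn2 P).mp hok, v, hvP, rfl⟩, ?_⟩
      rw [alpha_insert P v hvP, hvi, hvj]
    · rintro ⟨Q, ⟨hhull, v, hvP, rfl⟩, rfl⟩
      exact ⟨(edgeOK_iff hm hn2 P).mpr hhull, regIdx m v.1, regIdx n v.2,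
        (alpha_pos_iff P _ _).mpr ⟨v, hvP, rfl, rfl⟩, alpha_insert P v hvP⟩
  · intro N hreach
    have hle : ∀ i j, N i j ≤
        (![![1, n - 2, 1], ![m - 2, (m - 2) * (n - 2), m - 2], ![1, n - 2, 1]] : Mat3) i j := by
      induction hreach with
      | refl => exact fun i j => le_rfl
      | tail hab hbc ih =>
        obtain ⟨-, i0, j0, -, rfl⟩ := hbc
        intro i j
        refine le_trans ?_ (ih i j)
        simp only [decEntry]
        split <;> omega
    have hchoice : ∀ p : Fin 3 × Fin 3, ∃ S : Finset (Fin m × Fin n),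
        S ⊆ Finset.univ.filter
          (fun v : Fin m × Fin n => regIdx m v.1 = p.1 ∧ regIdx n v.2 = p.2) ∧
        S.card = N p.1 p.2 := by
      intro p
      apply Finset.exists_subset_card_eq
      have h1 : (Finset.univ.filter
          (fun v : Fin m × Fin n => regIdx m v.1 = p.1 ∧ regIdx n v.2 = p.2)).card =
          alphaMap m n (∅ : Finset (Fin m × Fin n)) p.1 p.2 := by
        rw [alphaMap]
        congr 1
        ext v
        simp
      rw [h1, alpha_empty hm hn2]
      exact hle p.1 p.2
    choose S hSsub hScard using hchoice
    refine ⟨Finset.univ.filter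
      (fun v : Fin m × Fin n => v ∉ S (regIdx m v.1, regIdx n v.2)), ?_⟩
    funext i j
    rw [alphaMap]
    have hfil : (Finset.univ.filter
        (fun v : Fin m × Fin n => v ∉ Finset.univ.filter
          (fun w : Fin m × Fin n => w ∉ S (regIdx m w.1, regIdx n w.2)) ∧
          regIdx m v.1 = i ∧ regIdx n v.2 = j)) = S (i, j) := by
      ext v
      simp only [Finset.mem_filter, Finset.mem_univ, true_and, not_not]
      constructor
      · rintro ⟨h1, h2, h3⟩
        rw [h2, h3] at h1
        exact h1
      · intro hv
        have hR := hSsub (i, j) hv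
        simp only [Finset.mem_filter, Finset.mem_univ, true_and] at hR
        obtain ⟨h2, h3⟩ := hR
        refine ⟨?_, h2, h3⟩
        rw [h2, h3]
        exact hv
    rw [hfil]
    exact hScard (i, j)
end
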